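/- Let M be symmetric positive definite and (e₀,e₁,e₂) an M-obtuse superbase of Z^2. Then for every e ∈ Z^2 \ {±e₀, ±e₁, ±e₂} with coprime coordinates, ‖e‖_M ≥ max{‖e₀‖_M, ‖e₁‖_M, ‖e₂‖_M}, where ‖e‖_M := √⟨e, M e⟩. The inequality is strict if no basis (f,g) of Z^2 (|det(f,g)| = 1) satisfies ⟨f, M g⟩ = 0. -/

import Mathlib

/-!
Write `e = a e₁ + b e₂` and `wᵢⱼ = -⟨eᵢ, M eⱼ⟩ ≥ 0`. Selling's formula gives
`‖e‖²_M = w₀₁ a² + w₀₂ b² + w₁₂ (a - b)²`, and in particular `‖eᵢ‖²_M` is the sum of the two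
weights at `eᵢ`. For primitive `e ≠ ±eᵢ` none of `a`, `b`, `a - b` vanishes, so
`‖e‖²_M ≥ w₀₁ + w₀₂ + w₁₂`, which exceeds each `‖eᵢ‖²_M` by the remaining weight; that weight is
positive when no basis is `M`-orthogonal.
-/

def det2 (f g : ℤ × ℤ) : ℤ := f.1 * g.2 - f.2 * g.1

def qf (M : Matrix (Fin 2) (Fin 2) ℝ) (f g : ℤ × ℤ) : ℝ :=
  (f.1 : ℝ) * (M 0 0 * g.1 + M 0 1 * g.2) + (f.2 : ℝ) * (M 1 0 * g.1 + M 1 1 * g.2)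

def IsSuperbase (e₀ e₁ e₂ : ℤ × ℤ) : Prop := e₀ + e₁ + e₂ = 0 ∧ |det2 e₁ e₂| = 1

def IsObtuse (M : Matrix (Fin 2) (Fin 2) ℝ) (e₀ e₁ e₂ : ℤ × ℤ) : Prop :=
  qf M e₀ e₁ ≤ 0 ∧ qf M e₀ e₂ ≤ 0 ∧ qf M e₁ e₂ ≤ 0

/-- The `M`-norm `‖e‖_M = √⟨e, M e⟩`. -/
noncomputable def normM (M : Matrix (Fin 2) (Fin 2) ℝ) (e : ℤ × ℤ) : ℝ :=
  Real.sqrt (qf M e e)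

theorem det2_eq_of_add_add_eq_zero {u v w : ℤ × ℤ} (h : u + v + w = 0) :
    det2 u v = det2 v w := by
  obtain rfl : u = -(v + w) := eq_neg_of_add_eq_zero_left (by rwa [← add_assoc])
  simp only [det2, Prod.fst_neg, Prod.snd_neg, Prod.fst_add, Prod.snd_add]
  ring

theorem exists_eq_zsmul_add_zsmul {u v : ℤ × ℤ} (huv : |det2 u v| = 1) (e : ℤ × ℤ) :
    ∃ a b : ℤ, e = a • u + b • v := by
  have hd : det2 u v * det2 u v = 1 := by rw [← abs_mul_abs_self, huv, one_mul]
  refine ⟨det2 u v * det2 e v, det2 u v * det2 u e, Prod.ext ?_ ?_⟩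
  · simp only [det2, Prod.fst_add, Prod.smul_fst, smul_eq_mul] at hd ⊢
    linear_combination (-e.1) * hd
  · simp only [det2, Prod.snd_add, Prod.smul_snd, smul_eq_mul] at hd ⊢
    linear_combination (-e.2) * hd

theorem eq_or_eq_neg_of_eq_zsmul {e v : ℤ × ℤ} {c : ℤ} (he : Int.gcd e.1 e.2 = 1)
    (hc : e = c • v) : e = v ∨ e = -v := by
  have hu : IsUnit c := (Int.isCoprime_iff_gcd_eq_one.mpr he).isUnit_of_dvd'
    ⟨v.1, by simp [hc]⟩ ⟨v.2, by simp [hc]⟩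
  rcases Int.isUnit_iff.mp hu with rfl | rfl <;> simp [hc]

theorem coeffs_ne_of_primitive {e₀ e₁ e₂ : ℤ × ℤ} (h : e₀ + e₁ + e₂ = 0) {a b : ℤ}
    (hgcd : Int.gcd (a • e₁ + b • e₂).1 (a • e₁ + b • e₂).2 = 1)
    (hne : a • e₁ + b • e₂ ∉ ({e₀, -e₀, e₁, -e₁, e₂, -e₂} : Set (ℤ × ℤ))) :
    a ≠ 0 ∧ b ≠ 0 ∧ a ≠ b := by
  simp only [Set.mem_insert_iff, Set.mem_singleton_iff, not_or] at hne
  refine ⟨?_, ?_, ?_⟩ <;> rintro rfl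
  · rcases eq_or_eq_neg_of_eq_zsmul hgcd (zero_smul ℤ e₁ ▸ zero_add (b • e₂)) with h | h <;>
      simp_all
  · rcases eq_or_eq_neg_of_eq_zsmul hgcd (zero_smul ℤ e₂ ▸ add_zero (a • e₁)) with h | h <;>
      simp_all
  · have : a • e₁ + a • e₂ = (-a) • e₀ := by
      rw [← smul_add, neg_smul, ← smul_neg,
        neg_eq_of_add_eq_zero_left (by linear_combination h : e₁ + e₂ + e₀ = 0)]
    rcases eq_or_eq_neg_of_eq_zsmul hgcd this with h | h <;> simp_all

theorem one_le_intCast_sq {n : ℤ} (hn : n ≠ 0) : (1 : ℝ) ≤ (n : ℝ) ^ 2 :=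
  one_le_sq_iff_one_le_abs _ |>.mpr (by exact_mod_cast Int.one_le_abs hn)

section
variable {M : Matrix (Fin 2) (Fin 2) ℝ}

theorem qf_comm (hM : M.IsSymm) (f g : ℤ × ℤ) : qf M f g = qf M g f := by
  simp only [qf, hM.apply 0 1]
  ring

theorem qf_self_eq_of_add_add_eq_zero (hM : M.IsSymm) {u v w : ℤ × ℤ} (h : u + v + w = 0) :
    qf M u u = -qf M u v - qf M u w := by
  obtain rfl : u = -(v + w) := eq_neg_of_add_eq_zero_left (by rwa [← add_assoc])
  simp only [qf, hM.apply 0 1, Prod.fst_neg, Prod.snd_neg, Prod.fst_add, Prod.snd_add]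
  push_cast
  ring

/-- Selling's formula. -/
theorem qf_zsmul_add_zsmul_self (hM : M.IsSymm) {e₀ e₁ e₂ : ℤ × ℤ} (h : e₀ + e₁ + e₂ = 0)
    (a b : ℤ) :
    qf M (a • e₁ + b • e₂) (a • e₁ + b • e₂) =
      -qf M e₀ e₁ * a ^ 2 - qf M e₀ e₂ * b ^ 2 - qf M e₁ e₂ * (a - b) ^ 2 := by
  obtain rfl : e₀ = -(e₁ + e₂) := eq_neg_of_add_eq_zero_left (by rwa [← add_assoc])
  simp only [qf, hM.apply 0 1, Prod.fst_neg, Prod.snd_neg, Prod.fst_add, Prod.snd_add,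
    Prod.smul_fst, Prod.smul_snd, smul_eq_mul]
  push_cast
  ring

theorem qf_selfs_eq_of_add_add_eq_zero (hM : M.IsSymm) {e₀ e₁ e₂ : ℤ × ℤ}
    (h : e₀ + e₁ + e₂ = 0) :
    qf M e₀ e₀ = -qf M e₀ e₁ - qf M e₀ e₂ ∧ qf M e₁ e₁ = -qf M e₀ e₁ - qf M e₁ e₂ ∧
      qf M e₂ e₂ = -qf M e₀ e₂ - qf M e₁ e₂ := by
  refine ⟨qf_self_eq_of_add_add_eq_zero hM h, ?_, ?_⟩
  · rw [qf_self_eq_of_add_add_eq_zero hM (by linear_combination h : e₁ + e₂ + e₀ = 0),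
      qf_comm hM e₁ e₀]
    ring
  · rw [qf_self_eq_of_add_add_eq_zero hM (by linear_combination h : e₂ + e₀ + e₁ = 0),
      qf_comm hM e₂ e₀, qf_comm hM e₂ e₁]

theorem neg_sum_le_qf_self (hM : M.IsSymm) {e₀ e₁ e₂ : ℤ × ℤ} (h : e₀ + e₁ + e₂ = 0)
    (hobt : IsObtuse M e₀ e₁ e₂) {a b : ℤ} (ha : a ≠ 0) (hb : b ≠ 0) (hab : a ≠ b) :
    -qf M e₀ e₁ - qf M e₀ e₂ - qf M e₁ e₂ ≤ qf M (a • e₁ + b • e₂) (a • e₁ + b • e₂) := by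
  obtain ⟨h₀₁, h₀₂, h₁₂⟩ := hobt
  have hab' := one_le_intCast_sq (sub_ne_zero.mpr hab)
  push_cast at hab'
  rw [qf_zsmul_add_zsmul_self hM h]
  linarith [mul_le_mul_of_nonpos_left (one_le_intCast_sq ha) h₀₁,
    mul_le_mul_of_nonpos_left (one_le_intCast_sq hb) h₀₂, mul_le_mul_of_nonpos_left hab' h₁₂]

theorem IsSuperbase.qf_ne_zero (hM : M.IsSymm) {e₀ e₁ e₂ : ℤ × ℤ} (hsb : IsSuperbase e₀ e₁ e₂)
    (hgen : ∀ f g : ℤ × ℤ, |det2 f g| = 1 → qf M f g ≠ 0) :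
    qf M e₀ e₁ ≠ 0 ∧ qf M e₀ e₂ ≠ 0 ∧ qf M e₁ e₂ ≠ 0 := by
  obtain ⟨h, hdet⟩ := hsb
  refine ⟨hgen e₀ e₁ (det2_eq_of_add_add_eq_zero h ▸ hdet), ?_, hgen e₁ e₂ hdet⟩
  have hdet₂₀ : |det2 e₂ e₀| = 1 :=
    det2_eq_of_add_add_eq_zero (by linear_combination h : e₁ + e₂ + e₀ = 0) ▸ hdet
  exact qf_comm hM e₂ e₀ ▸ hgen e₂ e₀ hdet₂₀

end

theorem stmt10_obtuse_minimal_general (M : Matrix (Fin 2) (Fin 2) ℝ)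
    (hsym : M.IsSymm)
    (e₀ e₁ e₂ : ℤ × ℤ) (hsb : IsSuperbase e₀ e₁ e₂) (hobt : IsObtuse M e₀ e₁ e₂)
    (e : ℤ × ℤ) (hgcd : Int.gcd e.1 e.2 = 1)
    (hne : e ∉ ({e₀, -e₀, e₁, -e₁, e₂, -e₂} : Set (ℤ × ℤ))) :
    max (normM M e₀) (max (normM M e₁) (normM M e₂)) ≤ normM M e ∧
    ((∀ f g : ℤ × ℤ, |det2 f g| = 1 → qf M f g ≠ 0) →
      max (normM M e₀) (max (normM M e₁) (normM M e₂)) < normM M e) := by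
  obtain ⟨a, b, rfl⟩ := exists_eq_zsmul_add_zsmul hsb.2 e
  obtain ⟨ha, hb, hab⟩ := coeffs_ne_of_primitive hsb.1 hgcd hne
  have hlow := neg_sum_le_qf_self hsym hsb.1 hobt ha hb hab
  obtain ⟨hQ₀, hQ₁, hQ₂⟩ := qf_selfs_eq_of_add_add_eq_zero hsym hsb.1
  obtain ⟨h₀₁, h₀₂, h₁₂⟩ := hobt
  simp only [normM]
  refine ⟨max_le (Real.sqrt_le_sqrt (by linarith)) (max_le (Real.sqrt_le_sqrt (by linarith))
    (Real.sqrt_le_sqrt (by linarith))), fun hgen => ?_⟩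
  obtain ⟨n₀₁, n₀₂, n₁₂⟩ := hsb.qf_ne_zero hsym hgen
  have s₀₁ := lt_of_le_of_ne h₀₁ n₀₁
  have s₀₂ := lt_of_le_of_ne h₀₂ n₀₂
  have s₁₂ := lt_of_le_of_ne h₁₂ n₁₂
  exact max_lt (Real.sqrt_lt_sqrt (by linarith) (by linarith))
    (max_lt (Real.sqrt_lt_sqrt (by linarith) (by linarith))
      (Real.sqrt_lt_sqrt (by linarith) (by linarith)))

/-- Elements of an `M`-obtuse superbase have minimal `M`-norm among primitive lattice
vectors; the inequality is strict when `M` is generic (no `M`-orthogonal basis). -/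
theorem stmt10_obtuse_minimal (M : Matrix (Fin 2) (Fin 2) ℝ)
    (hsym : M.IsSymm) (hpos : M.PosDef)
    (e₀ e₁ e₂ : ℤ × ℤ) (hsb : IsSuperbase e₀ e₁ e₂) (hobt : IsObtuse M e₀ e₁ e₂)
    (e : ℤ × ℤ) (hgcd : Int.gcd e.1 e.2 = 1)
    (hne : e ∉ ({e₀, -e₀, e₁, -e₁, e₂, -e₂} : Set (ℤ × ℤ))) :
    max (normM M e₀) (max (normM M e₁) (normM M e₂)) ≤ normM M e ∧
    ((∀ f g : ℤ × ℤ, |det2 f g| = 1 → qf M f g ≠ 0) →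
      max (normM M e₀) (max (normM M e₁) (normM M e₂)) < normM M e) :=
  stmt10_obtuse_minimal_general M hsym e₀ e₁ e₂ hsb hobt e hgcd hne
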